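/- arXiv:1602.03111 — 3 statements merged into one kernel-verified Lean document; each statement's English description precedes it below -/
import Mathlib

section
/- In the Set Cover reduction graph with seed set S = {s} and no boosted nodes, the influence spread satisfies σ_{{s}}(∅) = 1 + m/2 + ∑_{j=1}^{n} (1 − 2^{−d_j}), where d_j = |{i : e_j ∈ C_i}| is the in-degree of node x_j. -/
open Finset
open scoped Classical

noncomputable section

variable {V : Type*}

/-- The probability weight of the live-edge configuration `L ⊆ E`:
each edge `e ∈ E` is independently live with probability `p e`. -/
def edgeWeight [DecidableEq V] (E : Finset (V × V)) (p : V × V → ℝ)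
    (L : Finset (V × V)) : ℝ :=
  (∏ e ∈ L, p e) * ∏ e ∈ E \ L, (1 - p e)

/-- `v` is activated in configuration `L`: it is reachable from some seed in `S`
through live (directed) edges. -/
def Reaches (L : Finset (V × V)) (S : Finset V) (v : V) : Prop :=
  ∃ s ∈ S, Relation.ReflTransGen (fun a b => (a, b) ∈ L) s v

/-- Activation probability of node `v` under the live-edge model with edge set `E`,
edge probabilities `p`, and seed set `S`. -/
def ap [Fintype V] [DecidableEq V] (E : Finset (V × V)) (p : V × V → ℝ)
    (S : Finset V) (v : V) : ℝ :=
  ∑ L ∈ E.powerset, edgeWeight E p L * (if Reaches L S v then 1 else 0)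

/-- Expected number of activated nodes lying in the node set `W`. -/
def spreadOn [Fintype V] [DecidableEq V] (E : Finset (V × V)) (p : V × V → ℝ)
    (S W : Finset V) : ℝ :=
  ∑ L ∈ E.powerset, edgeWeight E p L * ((W.filter (fun v => Reaches L S v)).card : ℝ)

/-- The influence spread `σ_S`: expected total number of activated nodes. -/
def spread [Fintype V] [DecidableEq V] (E : Finset (V × V)) (p : V × V → ℝ)
    (S : Finset V) : ℝ :=
  spreadOn E p S Finset.univ

/-- Boosted edge probabilities: edges pointing into a boosted node use `p'`. -/
def pB (p p' : V × V → ℝ) (B : Finset V) : V × V → ℝ :=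
  fun e => if e.2 ∈ B then p' e else p e

/-- The bidirected edge set of an undirected graph: each undirected edge is
replaced by the two directed edges. -/
def treeEdges [Fintype V] [DecidableEq V] (T : SimpleGraph V) [DecidableRel T.Adj] :
    Finset (V × V) :=
  Finset.univ.filter (fun e => T.Adj e.1 e.2)

/-- `apSub E p S v u` is `ap_B(v\u)`: the activation probability of `v` in the
subtree `G_{v\u}` obtained by removing the directed edges `(u,v)` and `(v,u)`. -/
def apSub [Fintype V] [DecidableEq V] (E : Finset (V × V)) (p : V × V → ℝ)
    (S : Finset V) (v u : V) : ℝ :=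
  ap (E \ {(u, v), (v, u)}) p S v

/-- The set of nodes of the connected component containing `v` w.r.t. edge set `E`. -/
def comp [Fintype V] [DecidableEq V] (E : Finset (V × V)) (v : V) : Finset V :=
  Finset.univ.filter (fun w => Relation.ReflTransGen (fun a b => (a, b) ∈ E) v w)

/-- `gain E p S v u` is `g_B(v\u)`: in the subtree `G_{v\u}`, the expected number of
activated nodes when the seed set is `(S ∩ V(G_{v\u})) ∪ {v}` minus the expected
number when the seed set is `S ∩ V(G_{v\u})`. -/
def gain [Fintype V] [DecidableEq V] (E : Finset (V × V)) (p : V × V → ℝ)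
    (S : Finset V) (v u : V) : ℝ :=
  spreadOn (E \ {(u, v), (v, u)}) p (insert v (S ∩ comp (E \ {(u, v), (v, u)}) v))
      (comp (E \ {(u, v), (v, u)}) v)
    - spreadOn (E \ {(u, v), (v, u)}) p (S ∩ comp (E \ {(u, v), (v, u)}) v)
      (comp (E \ {(u, v), (v, u)}) v)


/-- Node type of the Set Cover reduction graph: the seed `s`, the set-nodes
`c_1, …, c_m`, and the element-nodes `x_1, …, x_n`. -/
abbrev SCNode (m n : ℕ) := Unit ⊕ (Fin m ⊕ Fin n)

def sNode {m n : ℕ} : SCNode m n := Sum.inl ()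

def cNode {m n : ℕ} (i : Fin m) : SCNode m n := Sum.inr (Sum.inl i)

def xNode {m n : ℕ} (j : Fin n) : SCNode m n := Sum.inr (Sum.inr j)

/-- Edges of the Set Cover reduction graph: `(s, c_i)` for every `i`, and
`(c_i, x_j)` whenever `e_j ∈ C_i`. -/
def scEdges (m n : ℕ) (C : Fin m → Finset (Fin n)) :
    Finset (SCNode m n × SCNode m n) :=
  (Finset.univ.image fun i : Fin m => (sNode, cNode i)) ∪
    (((Finset.univ : Finset (Fin m × Fin n)).filter fun ij => ij.2 ∈ C ij.1).image
      fun ij => (cNode ij.1, xNode ij.2))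

/-- Influence probabilities: `1/2` on edges into the `c_i`'s, `1` on edges
into the `x_j`'s. -/
def scP (m n : ℕ) : SCNode m n × SCNode m n → ℝ :=
  fun e => match e.2 with
  | Sum.inr (Sum.inl _) => 1 / 2
  | _ => 1

/-- Boosted influence probabilities: `1` on every edge. -/
def scP' (m n : ℕ) : SCNode m n × SCNode m n → ℝ := fun _ => 1

/-- In-degree `d_j` of the element node `x_j`: number of sets containing `e_j`. -/
def scDeg {m n : ℕ} (C : Fin m → Finset (Fin n)) (j : Fin n) : ℕ :=
  (Finset.univ.filter fun i : Fin m => j ∈ C i).card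

namespace SCaux

variable {m n : ℕ}

/-- The `s → c_i` edges. -/
def scA (m n : ℕ) : Finset (SCNode m n × SCNode m n) :=
  Finset.univ.image fun i : Fin m => (sNode, cNode i)

/-- The `c_i → x_j` edges. -/
def scBs (m n : ℕ) (C : Fin m → Finset (Fin n)) : Finset (SCNode m n × SCNode m n) :=
  ((Finset.univ : Finset (Fin m × Fin n)).filter fun ij => ij.2 ∈ C ij.1).image
    fun ij => (cNode ij.1, xNode ij.2)

lemma scEdges_eq (C : Fin m → Finset (Fin n)) : scEdges m n C = scA m n ∪ scBs m n C := rfl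

lemma mem_scA {e : SCNode m n × SCNode m n} :
    e ∈ scA m n ↔ ∃ i, e = (sNode, cNode i) := by
  simp [scA, eq_comm]

lemma mem_scBs {C : Fin m → Finset (Fin n)} {e : SCNode m n × SCNode m n} :
    e ∈ scBs m n C ↔ ∃ i j, j ∈ C i ∧ e = (cNode i, xNode j) := by
  constructor
  · intro h
    obtain ⟨ij, hij, rfl⟩ := Finset.mem_image.mp h
    exact ⟨ij.1, ij.2, (Finset.mem_filter.mp hij).2, rfl⟩
  · rintro ⟨i, j, hij, rfl⟩
    exact Finset.mem_image.mpr ⟨(i, j), Finset.mem_filter.mpr ⟨Finset.mem_univ _, hij⟩, rfl⟩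

/-- Live-edge configuration determined by `T ⊆ Fin m`. -/
def liveT (C : Fin m → Finset (Fin n)) (T : Finset (Fin m)) :
    Finset (SCNode m n × SCNode m n) :=
  (T.image fun i => ((sNode : SCNode m n), cNode i)) ∪ scBs m n C

lemma mem_liveT {C : Fin m → Finset (Fin n)} {T : Finset (Fin m)}
    {e : SCNode m n × SCNode m n} :
    e ∈ liveT C T ↔ (∃ i ∈ T, e = (sNode, cNode i)) ∨
      (∃ i j, j ∈ C i ∧ e = (cNode i, xNode j)) := by
  simp only [liveT, Finset.mem_union, Finset.mem_image, mem_scBs, eq_comm]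

lemma liveT_subset {C : Fin m → Finset (Fin n)} {T : Finset (Fin m)} :
    liveT C T ⊆ scEdges m n C := by
  intro e he
  rw [scEdges_eq, Finset.mem_union]
  rcases mem_liveT.mp he with ⟨i, _, rfl⟩ | h
  · exact Or.inl (mem_scA.mpr ⟨i, rfl⟩)
  · exact Or.inr (mem_scBs.mpr h)

lemma reach_classify {C : Fin m → Finset (Fin n)} {T : Finset (Fin m)} {v : SCNode m n}
    (h : Relation.ReflTransGen (fun a b => (a, b) ∈ liveT C T) sNode v) :
    v = sNode ∨ (∃ i ∈ T, v = cNode i) ∨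
      (∃ j, (∃ i, j ∈ C i ∧ i ∈ T) ∧ v = xNode j) := by
  induction h with
  | refl => exact Or.inl rfl
  | tail _ hstep ih =>
    rcases mem_liveT.mp hstep with ⟨i, hi, he⟩ | ⟨i, j, hij, he⟩
    · obtain ⟨h1, h2⟩ := Prod.ext_iff.mp he
      subst h2
      exact Or.inr (Or.inl ⟨i, hi, rfl⟩)
    · obtain ⟨h1, h2⟩ := Prod.ext_iff.mp he
      subst h1
      subst h2
      rcases ih with h | ⟨i', hi', hci⟩ | ⟨j', _, hxj⟩
      · exact absurd h (by simp [cNode, sNode])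
      · have hii : i' = i := by
          simpa [cNode] using hci.symm
        subst hii
        exact Or.inr (Or.inr ⟨j, ⟨i', hij, hi'⟩, rfl⟩)
      · exact absurd hxj (by simp [cNode, xNode])

lemma reach_iff {C : Fin m → Finset (Fin n)} {T : Finset (Fin m)} (v : SCNode m n) :
    Reaches (liveT C T) ({sNode} : Finset (SCNode m n)) v ↔
      (v = sNode ∨ (∃ i ∈ T, v = cNode i) ∨
        (∃ j, (∃ i, j ∈ C i ∧ i ∈ T) ∧ v = xNode j)) := by
  constructor
  · rintro ⟨s, hs, h⟩
    rw [Finset.mem_singleton] at hs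
    subst hs
    exact reach_classify h
  · rintro (rfl | ⟨i, hi, rfl⟩ | ⟨j, ⟨i, hij, hi⟩, rfl⟩)
    · exact ⟨sNode, Finset.mem_singleton_self _, Relation.ReflTransGen.refl⟩
    · exact ⟨sNode, Finset.mem_singleton_self _,
        Relation.ReflTransGen.single (mem_liveT.mpr (Or.inl ⟨i, hi, rfl⟩))⟩
    · exact ⟨sNode, Finset.mem_singleton_self _,
        Relation.ReflTransGen.tail
          (Relation.ReflTransGen.single (mem_liveT.mpr (Or.inl ⟨i, hi, rfl⟩)))
          (mem_liveT.mpr (Or.inr ⟨i, j, hij, rfl⟩))⟩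

lemma count_eval (C : Fin m → Finset (Fin n)) (T : Finset (Fin m)) :
    (((Finset.univ : Finset (SCNode m n)).filter
        (fun v => Reaches (liveT C T) ({sNode} : Finset (SCNode m n)) v)).card : ℝ)
      = 1 + T.card + ∑ j : Fin n, (if ∃ i, j ∈ C i ∧ i ∈ T then (1 : ℝ) else 0) := by
  rw [Finset.natCast_card_filter, Fintype.sum_sum_type, Fintype.sum_sum_type]
  simp only [reach_iff]
  simp [sNode, cNode, xNode]
  ring

lemma cpair_inj :
    Function.Injective (fun i : Fin m => (((sNode, cNode i)) : SCNode m n × SCNode m n)) := by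
  intro a b h
  simpa [sNode, cNode, Prod.mk.injEq] using h

lemma disj_image_scBs (C : Fin m → Finset (Fin n)) (T : Finset (Fin m)) :
    Disjoint (T.image fun i => ((sNode : SCNode m n), cNode i)) (scBs m n C) := by
  rw [Finset.disjoint_left]
  rintro e he1 he2
  obtain ⟨i, -, rfl⟩ := Finset.mem_image.mp he1
  obtain ⟨i', j', -, he⟩ := mem_scBs.mp he2
  simp [sNode, cNode, xNode, Prod.ext_iff] at he

lemma sdiff_liveT (C : Fin m → Finset (Fin n)) (T : Finset (Fin m)) :
    scEdges m n C \ liveT C T =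
      ((Finset.univ \ T).image fun i => ((sNode : SCNode m n), cNode i)) := by
  ext e
  constructor
  · intro he
    obtain ⟨heE, hne⟩ := Finset.mem_sdiff.mp he
    rw [scEdges_eq, Finset.mem_union] at heE
    rcases heE with hA | hB
    · obtain ⟨i, rfl⟩ := mem_scA.mp hA
      refine Finset.mem_image.mpr ⟨i, Finset.mem_sdiff.mpr ⟨Finset.mem_univ i, ?_⟩, rfl⟩
      intro hiT
      exact hne (mem_liveT.mpr (Or.inl ⟨i, hiT, rfl⟩))
    · exact absurd (mem_liveT.mpr (Or.inr (mem_scBs.mp hB))) hne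
  · intro he
    obtain ⟨i, hi, rfl⟩ := Finset.mem_image.mp he
    obtain ⟨-, hiT⟩ := Finset.mem_sdiff.mp hi
    refine Finset.mem_sdiff.mpr ⟨?_, ?_⟩
    · rw [scEdges_eq, Finset.mem_union]
      exact Or.inl (mem_scA.mpr ⟨i, rfl⟩)
    · intro hmem
      rcases mem_liveT.mp hmem with ⟨i', hi', he'⟩ | ⟨i', j', -, he'⟩
      · have hii : i = i' := by simpa [cNode, sNode, Prod.ext_iff] using he'
        exact hiT (hii ▸ hi')
      · simp [sNode, cNode, xNode, Prod.ext_iff] at he'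

lemma scP_c (i : Fin m) (a : SCNode m n) : scP m n (a, cNode i) = 1/2 := rfl

lemma scP_x (j : Fin n) (a : SCNode m n) : scP m n (a, xNode j) = 1 := rfl

lemma liveT_weight (C : Fin m → Finset (Fin n)) (T : Finset (Fin m)) :
    edgeWeight (scEdges m n C) (scP m n) (liveT C T) = (1/2 : ℝ) ^ m := by
  rw [edgeWeight, sdiff_liveT]
  rw [liveT, Finset.prod_union (disj_image_scBs C T)]
  rw [Finset.prod_image (fun a _ b _ h => cpair_inj h),
      Finset.prod_image (fun a _ b _ h => cpair_inj h)]
  have h1 : ∏ i ∈ T, scP m n (sNode, cNode i) = (1/2 : ℝ) ^ T.card := by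
    rw [Finset.prod_congr rfl (fun i _ => scP_c i sNode), Finset.prod_const]
  have h2 : ∏ e ∈ scBs m n C, scP m n e = 1 := by
    apply Finset.prod_eq_one
    intro e he
    obtain ⟨i, j, -, rfl⟩ := mem_scBs.mp he
    exact scP_x j _
  have h3 : ∏ i ∈ (Finset.univ \ T), (1 - scP m n ((sNode : SCNode m n), cNode i))
      = (1/2 : ℝ) ^ (Finset.univ \ T).card := by
    have hc : ∀ i ∈ Finset.univ \ T,
        (1 - scP m n ((sNode : SCNode m n), cNode i)) = (1/2 : ℝ) := by
      intro i _
      rw [scP_c]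
      norm_num
    rw [Finset.prod_congr rfl hc, Finset.prod_const]
  rw [h1, h2, h3, mul_one, ← pow_add]
  congr 1
  have hT : T.card ≤ m := by simpa using Finset.card_le_univ T
  rw [Finset.card_sdiff_of_subset (Finset.subset_univ T), Finset.card_univ, Fintype.card_fin]
  omega

lemma filter_notMem_powerset (i : Fin m) :
    ((Finset.univ : Finset (Fin m)).powerset.filter fun T => ¬ i ∈ T)
      = (Finset.univ.erase i).powerset := by
  ext T
  simp [Finset.subset_erase]

lemma filter_not_exists_powerset (C : Fin m → Finset (Fin n)) (j : Fin n) :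
    ((Finset.univ : Finset (Fin m)).powerset.filter fun T => ¬ ∃ i, j ∈ C i ∧ i ∈ T)
      = ((Finset.univ.filter fun i => ¬ j ∈ C i)).powerset := by
  ext T
  simp only [Finset.mem_filter, Finset.mem_powerset, not_exists, not_and]
  constructor
  · rintro ⟨-, h⟩ x hx
    exact Finset.mem_filter.mpr ⟨Finset.mem_univ x, fun hc => h x hc hx⟩
  · intro h
    refine ⟨Finset.subset_univ T, fun x hc hx => ?_⟩
    exact (Finset.mem_filter.mp (h hx)).2 hc

lemma liveT_filter_eq {C : Fin m → Finset (Fin n)} {L : Finset (SCNode m n × SCNode m n)}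
    (hL : L ∈ (scEdges m n C).powerset.filter fun L => scBs m n C ⊆ L) :
    liveT C (Finset.univ.filter fun k => ((sNode : SCNode m n), cNode k) ∈ L) = L := by
  obtain ⟨hLp, hBL⟩ := Finset.mem_filter.mp hL
  have hLE := Finset.mem_powerset.mp hLp
  ext e
  constructor
  · intro he
    rcases mem_liveT.mp he with ⟨i, hi, rfl⟩ | ⟨i, j, hij, rfl⟩
    · exact (Finset.mem_filter.mp hi).2
    · exact hBL (mem_scBs.mpr ⟨i, j, hij, rfl⟩)
  · intro he
    have heE := hLE he
    rw [scEdges_eq, Finset.mem_union] at heE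
    rcases heE with hA | hB
    · obtain ⟨i, rfl⟩ := mem_scA.mp hA
      exact mem_liveT.mpr (Or.inl ⟨i, Finset.mem_filter.mpr ⟨Finset.mem_univ i, he⟩, rfl⟩)
    · exact mem_liveT.mpr (Or.inr (mem_scBs.mp hB))

lemma filter_liveT_eq (C : Fin m → Finset (Fin n)) (T : Finset (Fin m)) :
    (Finset.univ.filter fun k => ((sNode : SCNode m n), cNode k) ∈ liveT C T) = T := by
  ext i
  simp only [Finset.mem_filter, Finset.mem_univ, true_and]
  constructor
  · intro h
    rcases mem_liveT.mp h with ⟨i', hi', he'⟩ | ⟨i', j', -, he'⟩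
    · have hii : i = i' := by simpa [cNode, sNode, Prod.mk.injEq] using he'
      exact hii ▸ hi'
    · exfalso
      simpa [sNode, cNode, xNode, Prod.mk.injEq] using he'
  · intro h
    exact mem_liveT.mpr (Or.inl ⟨i, h, rfl⟩)

end SCaux

open SCaux

/-- In the Set Cover reduction graph with seed set `S = {s}` and no boosted nodes,
the influence spread satisfies
`σ_{{s}}(∅) = 1 + m/2 + ∑_{j=1}^{n} (1 − 2^{−d_j})`,
where `d_j = |{i : e_j ∈ C_i}|` is the in-degree of node `x_j`. -/
theorem setCover_spread_no_boost (m n : ℕ) (C : Fin m → Finset (Fin n))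
    (hcov : ∀ j : Fin n, ∃ i : Fin m, j ∈ C i) :
    spread (scEdges m n C) (pB (scP m n) (scP' m n) (∅ : Finset (SCNode m n)))
        ({sNode} : Finset (SCNode m n)) =
      1 + (m : ℝ) / 2 + ∑ j : Fin n, (1 - (1 / 2 : ℝ) ^ (scDeg C j)) := by
  classical
  have hp : pB (scP m n) (scP' m n) (∅ : Finset (SCNode m n)) = scP m n := by
    funext e
    simp [pB]
  rw [hp, spread, spreadOn]
  have hzero : ∀ L ∈ (scEdges m n C).powerset,
      edgeWeight (scEdges m n C) (scP m n) L *
        ((Finset.univ.filter fun v => Reaches L ({sNode} : Finset (SCNode m n)) v).card : ℝ) ≠ 0 →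
      scBs m n C ⊆ L := by
    intro L _ hne
    by_contra hsub
    apply hne
    obtain ⟨e, heB, heL⟩ := Finset.not_subset.mp hsub
    have heE : e ∈ scEdges m n C := by
      rw [scEdges_eq, Finset.mem_union]
      exact Or.inr heB
    have hw : edgeWeight (scEdges m n C) (scP m n) L = 0 := by
      rw [edgeWeight]
      have hpe : (1 : ℝ) - scP m n e = 0 := by
        obtain ⟨i, j, -, rfl⟩ := mem_scBs.mp heB
        rw [scP_x]
        ring
      rw [Finset.prod_eq_zero (Finset.mem_sdiff.mpr ⟨heE, heL⟩) hpe, mul_zero]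
    rw [hw, zero_mul]
  rw [← Finset.sum_filter_of_ne hzero]
  have key : ∑ L ∈ (scEdges m n C).powerset.filter (fun L => scBs m n C ⊆ L),
      edgeWeight (scEdges m n C) (scP m n) L *
        ((Finset.univ.filter fun v => Reaches L ({sNode} : Finset (SCNode m n)) v).card : ℝ)
      = ∑ T ∈ (Finset.univ : Finset (Fin m)).powerset,
          ((1 : ℝ)/2)^m * (1 + T.card + ∑ j : Fin n,
            (if ∃ i, j ∈ C i ∧ i ∈ T then (1 : ℝ) else 0)) := by
    refine Finset.sum_bij'
      (fun L _ => Finset.univ.filter fun k => ((sNode : SCNode m n), cNode k) ∈ L)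
      (fun T _ => liveT C T) ?_ ?_ ?_ ?_ ?_
    · intro L hL
      exact Finset.mem_powerset.mpr (Finset.subset_univ _)
    · intro T hT
      refine Finset.mem_filter.mpr ⟨Finset.mem_powerset.mpr liveT_subset, ?_⟩
      intro e he
      exact mem_liveT.mpr (Or.inr (mem_scBs.mp he))
    · intro L hL
      exact liveT_filter_eq hL
    · intro T hT
      exact filter_liveT_eq C T
    · intro L hL
      conv_lhs => rw [← liveT_filter_eq hL]
      rw [liveT_weight, count_eval]
  rw [key]
  simp only [mul_add, mul_one, Finset.sum_add_distrib]
  have e1 : ∑ _T ∈ (Finset.univ : Finset (Fin m)).powerset, ((1:ℝ)/2)^m = 1 := by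
    rw [Finset.sum_const, Finset.card_powerset, Finset.card_univ, Fintype.card_fin,
      nsmul_eq_mul]
    push_cast
    rw [← mul_pow]
    norm_num
  have e2 : ∑ T ∈ (Finset.univ : Finset (Fin m)).powerset, ((1:ℝ)/2)^m * T.card
      = m / 2 := by
    have hcardeq : ∀ T : Finset (Fin m), ((1:ℝ)/2)^m * T.card
        = ∑ i : Fin m, (if i ∈ T then ((1:ℝ)/2)^m else 0) := by
      intro T
      rw [Finset.sum_ite_mem, Finset.univ_inter, Finset.sum_const, nsmul_eq_mul, mul_comm]
    rw [Finset.sum_congr rfl fun T _ => hcardeq T, Finset.sum_comm]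
    have hcnt : ∀ i : Fin m, (∑ T ∈ (Finset.univ : Finset (Fin m)).powerset,
        if i ∈ T then ((1:ℝ)/2)^m else 0) = 1/2 := by
      intro i
      obtain ⟨k, rfl⟩ : ∃ k, m = k + 1 := ⟨m - 1, by have := i.pos; omega⟩
      rw [← Finset.sum_filter, Finset.sum_const, nsmul_eq_mul]
      have hneg : (((Finset.univ : Finset (Fin (k+1))).powerset.filter
          fun T => ¬ i ∈ T)).card = 2^k := by
        rw [filter_notMem_powerset i, Finset.card_powerset,
          Finset.card_erase_of_mem (Finset.mem_univ i), Finset.card_univ, Fintype.card_fin,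
          Nat.add_sub_cancel]
      have htot := Finset.card_filter_add_card_filter_not
        (s := (Finset.univ : Finset (Fin (k+1))).powerset) (p := fun T => i ∈ T)
      rw [Finset.card_powerset, Finset.card_univ, Fintype.card_fin, hneg] at htot
      have hpos : (((Finset.univ : Finset (Fin (k+1))).powerset.filter
          fun T => i ∈ T)).card = 2^k := by
        rw [pow_succ] at htot
        omega
      rw [hpos]
      have hh : ((1:ℝ)/2)^k * 2^k = 1 := by
        rw [← mul_pow]
        norm_num
      push_cast
      rw [pow_succ]
      linear_combination ((1:ℝ)/2) * hh
    rw [Finset.sum_congr rfl fun i _ => hcnt i, Finset.sum_const, Finset.card_univ,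
      Fintype.card_fin, nsmul_eq_mul]
    ring
  have e3 : ∑ T ∈ (Finset.univ : Finset (Fin m)).powerset,
      ((1:ℝ)/2)^m * (∑ j : Fin n, (if ∃ i, j ∈ C i ∧ i ∈ T then (1:ℝ) else 0))
      = ∑ j : Fin n, (1 - (1/2 : ℝ) ^ (scDeg C j)) := by
    simp only [Finset.mul_sum]
    rw [Finset.sum_comm]
    refine Finset.sum_congr rfl fun j _ => ?_
    have hite : ∀ T : Finset (Fin m), ((1:ℝ)/2)^m * (if ∃ i, j ∈ C i ∧ i ∈ T then (1:ℝ) else 0)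
        = (if ∃ i, j ∈ C i ∧ i ∈ T then ((1:ℝ)/2)^m else 0) := by
      intro T
      split <;> ring
    rw [Finset.sum_congr rfl fun T _ => hite T, ← Finset.sum_filter, Finset.sum_const,
      nsmul_eq_mul]
    have hdm : scDeg C j ≤ m := (Finset.card_filter_le _ _).trans (by simp)
    have hneg : (((Finset.univ : Finset (Fin m)).powerset.filter
        fun T => ¬ ∃ i, j ∈ C i ∧ i ∈ T)).card = 2^(m - scDeg C j) := by
      rw [filter_not_exists_powerset C j, Finset.card_powerset]
      congr 1
      have htot2 := Finset.card_filter_add_card_filter_not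
        (s := (Finset.univ : Finset (Fin m))) (p := fun i => j ∈ C i)
      rw [Finset.card_univ, Fintype.card_fin] at htot2
      unfold scDeg
      omega
    have htot := Finset.card_filter_add_card_filter_not
      (s := (Finset.univ : Finset (Fin m)).powerset) (p := fun T => ∃ i, j ∈ C i ∧ i ∈ T)
    rw [Finset.card_powerset, Finset.card_univ, Fintype.card_fin, hneg] at htot
    have hle : (2:ℕ)^(m - scDeg C j) ≤ 2^m :=
      Nat.pow_le_pow_right (by norm_num) (Nat.sub_le m _)
    have hpos : (((Finset.univ : Finset (Fin m)).powerset.filter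
        fun T => ∃ i, j ∈ C i ∧ i ∈ T)).card = 2^m - 2^(m - scDeg C j) := by omega
    rw [hpos]
    have hcast : (((2:ℕ)^m - 2^(m - scDeg C j) : ℕ) : ℝ) = 2^m - 2^(m - scDeg C j) := by
      rw [Nat.cast_sub hle]
      push_cast
      ring
    rw [hcast, sub_mul]
    have h1 : ((2:ℝ)^m) * ((1:ℝ)/2)^m = 1 := by
      rw [← mul_pow]
      norm_num
    have h2 : ((2:ℝ)^(m - scDeg C j)) * ((1:ℝ)/2)^m = ((1:ℝ)/2)^(scDeg C j) := by
      have hsplit : ((1:ℝ)/2)^m = ((1:ℝ)/2)^(m - scDeg C j) * ((1:ℝ)/2)^(scDeg C j) := by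
        rw [← pow_add, Nat.sub_add_cancel hdm]
      rw [hsplit, ← mul_assoc, ← mul_pow]
      norm_num
    rw [h1, h2]
  rw [e1, e2, e3]


end
end

section
/- In the Set Cover reduction graph with seed set S = {s}, for every index set I ⊆ {1, …, m} and boost set B = {c_i : i ∈ I}, the boosted influence spread satisfies σ_{{s}}(B) = 1 + |I| + (m − |I|)/2 + |{j : e_j ∈ ⋃_{i∈I} C_i}| + ∑_{j : e_j ∉ ⋃_{i∈I} C_i} (1 − 2^{−d_j}), where d_j = |{i : e_j ∈ C_i}|. -/
open Finset
open scoped Classical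

noncomputable section

variable {V : Type*}

/-!
The live-edge weight `edgeWeight` is a product measure on configurations, so the probability
that no edge of a set `F` is live is `∏ e ∈ F, (1 - p e)`. In the reduction graph `c_i` is
reached exactly when `(s, c_i)` is live; since every edge into an `x_j` is live with probability
one, `x_j` is almost surely reached exactly when some `(s, c_i)` with `e_j ∈ C_i` is live.
Under the boost `(s, c_i)` is live with probability `1` for `i ∈ I` and `1/2` otherwise, so
`x_j` is reached with probability `1` if `e_j` is covered by `I` and `1 - 2^{-d_j}` otherwise;
the spread is the sum of the activation probabilities.
-/

section LiveEdge

variable [DecidableEq V] {E F : Finset (V × V)} {p : V × V → ℝ}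

theorem sum_edgeWeight_mul_prod_ite (a b : V × V → ℝ) :
    ∑ L ∈ E.powerset, edgeWeight E p L * ∏ e ∈ E, (if e ∈ L then a e else b e) =
      ∏ e ∈ E, (p e * a e + (1 - p e) * b e) := by
  rw [prod_add]
  refine sum_congr rfl fun L hL => ?_
  rw [prod_ite, filter_mem_eq_inter, filter_notMem_eq_sdiff,
    inter_eq_right.2 (mem_powerset.1 hL), edgeWeight, prod_mul_distrib, prod_mul_distrib]
  ring

theorem sum_edgeWeight_mul_indicator_disjoint (hF : F ⊆ E) :
    ∑ L ∈ E.powerset, edgeWeight E p L * (if Disjoint L F then 1 else 0) =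
      ∏ e ∈ F, (1 - p e) := by
  have hind : ∀ L ∈ E.powerset, (if Disjoint L F then (1 : ℝ) else 0) =
      ∏ e ∈ E, (if e ∈ L then (if e ∈ F then 0 else 1) else 1) := by
    intro L hL
    split_ifs with hLF
    · refine (prod_eq_one fun e _ => ?_).symm
      by_cases heL : e ∈ L <;> simp [heL, disjoint_left.1 hLF]
    · obtain ⟨e, heL, heF⟩ := not_disjoint_iff.1 hLF
      exact (prod_eq_zero (mem_powerset.1 hL heL) (by simp [heL, heF])).symm
  calc ∑ L ∈ E.powerset, edgeWeight E p L * (if Disjoint L F then 1 else 0)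
      = ∏ e ∈ E, (if e ∈ F then 1 - p e else 1) := by
        rw [sum_congr rfl fun L hL => by rw [hind L hL], sum_edgeWeight_mul_prod_ite]
        exact prod_congr rfl fun e _ => by split_ifs <;> ring
    _ = ∏ e ∈ F, (1 - p e) := by rw [prod_ite_mem, inter_eq_right.2 hF]

theorem sum_edgeWeight : ∑ L ∈ E.powerset, edgeWeight E p L = 1 := by
  simpa using sum_edgeWeight_mul_indicator_disjoint (p := p) (empty_subset E)

/-- Configurations missing an edge of probability one have weight zero. -/
theorem sum_edgeWeight_mul_congr {f g : Finset (V × V) → ℝ}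
    (h : ∀ L ⊆ E, (∀ e ∈ E, p e = 1 → e ∈ L) → f L = g L) :
    ∑ L ∈ E.powerset, edgeWeight E p L * f L =
      ∑ L ∈ E.powerset, edgeWeight E p L * g L := by
  refine sum_congr rfl fun L hL => ?_
  by_cases hsure : ∀ e ∈ E, p e = 1 → e ∈ L
  · rw [h L (mem_powerset.1 hL) hsure]
  · push Not at hsure
    obtain ⟨e, he, hpe, heL⟩ := hsure
    have hzero : edgeWeight E p L = 0 :=
      mul_eq_zero_of_right _ (prod_eq_zero (mem_sdiff.2 ⟨he, heL⟩) (by rw [hpe, sub_self]))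
    rw [hzero, zero_mul, zero_mul]

variable [Fintype V] {S : Finset V} {v : V}

theorem ap_eq_one_of_mem (hv : v ∈ S) : ap E p S v = 1 := by
  simp_rw [ap, show ∀ L, Reaches L S v from fun _ => ⟨v, hv, .refl⟩, if_true, mul_one]
  exact sum_edgeWeight

theorem ap_eq_one_sub_prod (hF : F ⊆ E)
    (hreach : ∀ L ⊆ E, (∀ e ∈ E, p e = 1 → e ∈ L) →
      (Reaches L S v ↔ ¬Disjoint L F)) :
    ap E p S v = 1 - ∏ e ∈ F, (1 - p e) := by
  calc ap E p S v
      = ∑ L ∈ E.powerset, edgeWeight E p L * (1 - if Disjoint L F then 1 else 0) :=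
        sum_edgeWeight_mul_congr fun L hL hsure => by
          rw [hreach L hL hsure]; split_ifs <;> norm_num
    _ = 1 - ∏ e ∈ F, (1 - p e) := by
        simp_rw [mul_sub, mul_one, sum_sub_distrib, sum_edgeWeight,
          sum_edgeWeight_mul_indicator_disjoint hF]

theorem spreadOn_eq_sum_ap (W : Finset V) : spreadOn E p S W = ∑ v ∈ W, ap E p S v := by
  simp_rw [spreadOn, ap, card_filter, Nat.cast_sum, Nat.cast_ite, Nat.cast_one, Nat.cast_zero,
    mul_sum]
  exact sum_comm

end LiveEdge

section SetCover

variable {m n : ℕ} {C : Fin m → Finset (Fin n)}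

theorem mem_scEdges {a b : SCNode m n} :
    (a, b) ∈ scEdges m n C ↔
      (∃ i, a = sNode ∧ b = cNode i) ∨
        ∃ i j, j ∈ C i ∧ a = cNode i ∧ b = xNode j := by
  simp only [scEdges, mem_union, mem_image, mem_filter, mem_univ, true_and, Prod.mk.injEq,
    Prod.exists]
  grind

theorem sNode_cNode_mem_scEdges (i : Fin m) : (sNode, cNode i) ∈ scEdges m n C :=
  mem_scEdges.2 (.inl ⟨i, rfl, rfl⟩)

theorem cNode_xNode_mem_scEdges {i : Fin m} {j : Fin n} :
    (cNode i, xNode j) ∈ scEdges m n C ↔ j ∈ C i := by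
  simp [mem_scEdges, sNode, cNode, xNode]

theorem sum_SCNode {M : Type*} [AddCommMonoid M] (f : SCNode m n → M) :
    ∑ v, f v = f sNode + ∑ i, f (cNode i) + ∑ j, f (xNode j) := by
  simp only [Fintype.sum_sum_type, Fintype.sum_unique, add_assoc]
  rfl

variable {L : Finset (SCNode m n × SCNode m n)}

theorem reaches_cNode_iff (hL : L ⊆ scEdges m n C) (i : Fin m) :
    Reaches L {sNode} (cNode i) ↔ (sNode, cNode i) ∈ L := by
  refine ⟨fun ⟨t, ht, h⟩ => ?_, fun h => ⟨sNode, mem_singleton_self _, .single h⟩⟩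
  rw [mem_singleton] at ht
  subst ht
  rcases h.cases_tail with h | ⟨c, _, hc⟩
  · simp [sNode, cNode] at h
  · rcases mem_scEdges.1 (hL hc) with ⟨_, rfl, _⟩ | ⟨_, _, _, _, h⟩
    · exact hc
    · simp [cNode, xNode] at h

theorem reaches_xNode_iff (hL : L ⊆ scEdges m n C) (j : Fin n) :
    Reaches L {sNode} (xNode j) ↔ ∃ i, (sNode, cNode i) ∈ L ∧ (cNode i, xNode j) ∈ L := by
  refine ⟨fun ⟨t, ht, h⟩ => ?_,
    fun ⟨i, hs, hx⟩ => ⟨sNode, mem_singleton_self _, .tail (.single hs) hx⟩⟩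
  rw [mem_singleton] at ht
  subst ht
  rcases h.cases_tail with h | ⟨c, hsc, hc⟩
  · simp [sNode, xNode] at h
  · rcases mem_scEdges.1 (hL hc) with ⟨_, _, h⟩ | ⟨i, _, _, rfl, _⟩
    · simp [cNode, xNode] at h
    · exact ⟨i, (reaches_cNode_iff hL i).1 ⟨sNode, mem_singleton_self _, hsc⟩, hc⟩

theorem ap_cNode (p : SCNode m n × SCNode m n → ℝ) (i : Fin m) :
    ap (scEdges m n C) p {sNode} (cNode i) = p (sNode, cNode i) := by
  rw [ap_eq_one_sub_prod (singleton_subset_iff.2 (sNode_cNode_mem_scEdges i))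
    fun L hL _ => by rw [reaches_cNode_iff hL, disjoint_singleton_right, not_not]]
  simp

theorem ap_xNode (p : SCNode m n × SCNode m n → ℝ)
    (hp : ∀ i j, j ∈ C i → p (cNode i, xNode j) = 1) (j : Fin n) :
    ap (scEdges m n C) p {sNode} (xNode j) =
      1 - ∏ i ∈ univ.filter (fun i => j ∈ C i), (1 - p (sNode, cNode i)) := by
  have hinj :
      Function.Injective fun i : Fin m => ((sNode, cNode i) : SCNode m n × SCNode m n) := by
    intro a b h
    simpa [cNode] using h
  rw [ap_eq_one_sub_prod (F := (univ.filter fun i => j ∈ C i).image fun i => (sNode, cNode i)),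
    prod_image hinj.injOn]
  · intro e he
    obtain ⟨i, -, rfl⟩ := mem_image.1 he
    exact sNode_cNode_mem_scEdges i
  · intro L hL hsure
    rw [reaches_xNode_iff hL, not_disjoint_iff]
    constructor
    · rintro ⟨i, hs, hx⟩
      have hij : j ∈ C i := cNode_xNode_mem_scEdges.1 (hL hx)
      exact ⟨_, hs, mem_image.2 ⟨i, mem_filter.2 ⟨mem_univ _, hij⟩, rfl⟩⟩
    · rintro ⟨_, hs, he⟩
      obtain ⟨i, hij, rfl⟩ := mem_image.1 he
      have hij : j ∈ C i := (mem_filter.1 hij).2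
      exact ⟨i, hs, hsure _ (cNode_xNode_mem_scEdges.2 hij) (hp i j hij)⟩

variable (I : Finset (Fin m))

theorem pB_sNode_cNode (i : Fin m) :
    pB (scP m n) (scP' m n) (I.image cNode) (sNode, cNode i) = if i ∈ I then 1 else 1 / 2 := by
  split_ifs with hi <;> simp [pB, scP, scP', cNode, hi]

theorem pB_cNode_xNode (i : Fin m) (j : Fin n) :
    pB (scP m n) (scP' m n) (I.image cNode) (cNode i, xNode j) = 1 := by
  simp [pB, scP, cNode, xNode]

theorem ap_xNode_boost (j : Fin n) :
    ap (scEdges m n C) (pB (scP m n) (scP' m n) (I.image cNode)) {sNode} (xNode j) =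
      if ∃ i ∈ I, j ∈ C i then 1 else 1 - (1 / 2) ^ scDeg C j := by
  rw [ap_xNode _ (fun i j _ => pB_cNode_xNode I i j)]
  simp_rw [pB_sNode_cNode]
  split_ifs with hcov
  · obtain ⟨i, hi, hij⟩ := hcov
    rw [prod_eq_zero (mem_filter.2 ⟨mem_univ i, hij⟩) (by simp [hi]), sub_zero]
  · push Not at hcov
    rw [prod_congr rfl fun i hi => by rw [if_neg fun hiI => hcov i hiI (mem_filter.1 hi).2],
      prod_const, scDeg]
    norm_num

end SetCover

theorem setCover_spread_boost_general (m n : ℕ) (C : Fin m → Finset (Fin n))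
    (I : Finset (Fin m)) :
    spread (scEdges m n C) (pB (scP m n) (scP' m n) (I.image cNode))
        ({sNode} : Finset (SCNode m n)) =
      1 + (I.card : ℝ) + ((m : ℝ) - I.card) / 2
        + ((Finset.univ.filter fun j : Fin n => ∃ i ∈ I, j ∈ C i).card : ℝ)
        + ∑ j ∈ Finset.univ.filter fun j : Fin n => ¬∃ i ∈ I, j ∈ C i,
            (1 - (1 / 2 : ℝ) ^ (scDeg C j)) := by
  have hc : ∀ i,
      ap (scEdges m n C) (pB (scP m n) (scP' m n) (I.image cNode)) {sNode} (cNode i) =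
        1 / 2 + if i ∈ I then 1 / 2 else 0 := fun i => by
    rw [ap_cNode, pB_sNode_cNode]
    split_ifs <;> norm_num
  rw [spread, spreadOn_eq_sum_ap, sum_SCNode, ap_eq_one_of_mem (mem_singleton_self _)]
  simp_rw [hc, ap_xNode_boost, sum_add_distrib, sum_ite_mem, sum_ite, sum_const, card_univ,
    Fintype.card_fin, univ_inter, nsmul_eq_mul]
  ring

/-- In the Set Cover reduction graph with seed set `S = {s}`, for every index set
`I ⊆ {1,…,m}` and boost set `B = {c_i : i ∈ I}`, the boosted influence spread is
`σ_{{s}}(B) = 1 + |I| + (m − |I|)/2 + |{j : e_j ∈ ⋃_{i∈I} C_i}|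
  + ∑_{j : e_j ∉ ⋃_{i∈I} C_i} (1 − 2^{−d_j})`, where `d_j = |{i : e_j ∈ C_i}|`. -/
theorem setCover_spread_boost (m n : ℕ) (C : Fin m → Finset (Fin n))
    (hcov : ∀ j : Fin n, ∃ i : Fin m, j ∈ C i) (I : Finset (Fin m)) :
    spread (scEdges m n C) (pB (scP m n) (scP' m n) (I.image cNode))
        ({sNode} : Finset (SCNode m n)) =
      1 + (I.card : ℝ) + ((m : ℝ) - I.card) / 2
        + ((Finset.univ.filter fun j : Fin n => ∃ i ∈ I, j ∈ C i).card : ℝ)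
        + ∑ j ∈ Finset.univ.filter fun j : Fin n => ¬∃ i ∈ I, j ∈ C i,
            (1 - (1 / 2 : ℝ) ^ (scDeg C j)) :=
  setCover_spread_boost_general m n C I

end
end

section
/- Let G be a bidirected tree with seed set S and boost set B, and assume that every non-seed node is activated with probability strictly less than one (ap_B(w) < 1 for all w ∉ S). Then for every non-seed node u and every neighbor v of u, one has 1 − ap_B(v\u) · p^B_{vu} > 0 and ap_B(u\v) = 1 − (1 − ap_B(u)) / (1 − ap_B(v\u) · p^B_{vu}). -/
/-!
Let `E'` be the edge set with `(u,v)` and `(v,u)` removed. Splitting on the live edges among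
these two, `u` is activated iff it is activated within `E'`, or `(v,u)` is live and `v` is
activated within `E'`. In a tree `{u,v}` is a bridge, so activation of `u` and of `v` within
`E'` depend on disjoint sets of edges and are independent. Hence
`1 - ap(u) = (1 - ap(u\v)) * (1 - ap(v\u) * p_vu)`, and the claim is this identity solved for
`ap(u\v)`; the positivity comes from `ap(u) < 1`.
-/

open Finset
open scoped Classical

noncomputable section

variable {V : Type*}

def reachInd (L : Finset (V × V)) (S : Finset V) (v : V) : ℝ :=
  if Reaches L S v then 1 else 0

theorem Reaches.mono {L L' : Finset (V × V)} {S : Finset V} {v : V} (h : L ⊆ L') :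
    Reaches L S v → Reaches L' S v :=
  fun ⟨s, hs, hr⟩ => ⟨s, hs, Relation.ReflTransGen.mono (fun _ _ hab => h hab) _ _ hr⟩

section Boost

variable {p p' : V × V → ℝ} {B : Finset V}

theorem pB_nonneg (hp0 : ∀ e, 0 ≤ p e) (hpp' : ∀ e, p e ≤ p' e) (e : V × V) :
    0 ≤ pB p p' B e := by
  unfold pB
  split_ifs
  exacts [(hp0 e).trans (hpp' e), hp0 e]

theorem pB_le_one (hpp' : ∀ e, p e ≤ p' e) (hp'1 : ∀ e, p' e ≤ 1) (e : V × V) :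
    pB p p' B e ≤ 1 := by
  unfold pB
  split_ifs
  exacts [hp'1 e, (hpp' e).trans (hp'1 e)]

end Boost

section LiveEdge

variable [DecidableEq V]

def liveExpect (E : Finset (V × V)) (q : V × V → ℝ) (f : Finset (V × V) → ℝ) : ℝ :=
  ∑ L ∈ E.powerset, edgeWeight E q L * f L

theorem ap_eq_liveExpect [Fintype V] (E : Finset (V × V)) (q : V × V → ℝ) (S : Finset V)
    (v : V) : ap E q S v = liveExpect E q (fun L => reachInd L S v) :=
  rfl

section Expectation

variable {E A B : Finset (V × V)} {q : V × V → ℝ}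

theorem liveExpect_congr {f g : Finset (V × V) → ℝ} (h : ∀ L ⊆ E, f L = g L) :
    liveExpect E q f = liveExpect E q g :=
  Finset.sum_congr rfl fun L hL => by rw [h L (Finset.mem_powerset.mp hL)]

theorem liveExpect_add (f g : Finset (V × V) → ℝ) :
    liveExpect E q (fun L => f L + g L) = liveExpect E q f + liveExpect E q g := by
  simp only [liveExpect, mul_add, Finset.sum_add_distrib]

theorem liveExpect_sub (f g : Finset (V × V) → ℝ) :
    liveExpect E q (fun L => f L - g L) = liveExpect E q f - liveExpect E q g := by
  simp only [liveExpect, mul_sub, Finset.sum_sub_distrib]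

theorem liveExpect_const_mul (c : ℝ) (f : Finset (V × V) → ℝ) :
    liveExpect E q (fun L => c * f L) = c * liveExpect E q f := by
  simp only [liveExpect, Finset.mul_sum]
  exact Finset.sum_congr rfl fun _ _ => by ring

theorem liveExpect_empty (f : Finset (V × V) → ℝ) : liveExpect ∅ q f = f ∅ := by
  simp [liveExpect, edgeWeight]

theorem liveExpect_insert {e : V × V} (he : e ∉ E) (f : Finset (V × V) → ℝ) :
    liveExpect (insert e E) q f =
      q e * liveExpect E q (fun L => f (insert e L)) + (1 - q e) * liveExpect E q f := by
  simp only [liveExpect, Finset.sum_powerset_insert he, Finset.mul_sum]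
  rw [add_comm]
  congr 1 <;> refine Finset.sum_congr rfl fun L hL => ?_
  · have heL : e ∉ L := fun h => he (Finset.mem_powerset.mp hL h)
    rw [edgeWeight, edgeWeight, Finset.prod_insert heL, Finset.insert_sdiff_insert,
      Finset.sdiff_insert_of_notMem he]
    ring
  · have heL : e ∉ L := fun h => he (Finset.mem_powerset.mp hL h)
    rw [edgeWeight, edgeWeight, Finset.insert_sdiff_of_notMem _ heL,
      Finset.prod_insert (fun h => he (Finset.mem_sdiff.mp h).1)]
    ring

theorem liveExpect_const (c : ℝ) : liveExpect E q (fun _ => c) = c := by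
  induction E using Finset.induction_on with
  | empty => exact liveExpect_empty _
  | insert e E he ih => rw [liveExpect_insert he, ih]; ring

theorem liveExpect_indicator_mem {e : V × V} (he : e ∈ E) :
    liveExpect E q (fun L => if e ∈ L then 1 else 0) = q e := by
  have he' : e ∉ E.erase e := Finset.notMem_erase e E
  rw [← Finset.insert_erase he, liveExpect_insert he', liveExpect_congr (g := fun _ => 0) fun L hL => if_neg fun h => he' (hL h)]
  simp only [Finset.mem_insert_self, if_true, liveExpect_const]
  ring

theorem liveExpect_union (h : Disjoint A B) (F : Finset (V × V) → ℝ) :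
    liveExpect (A ∪ B) q F =
      liveExpect A q (fun L₁ => liveExpect B q (fun L₂ => F (L₁ ∪ L₂))) := by
  induction A using Finset.induction_on generalizing F with
  | empty => simp only [Finset.empty_union, liveExpect_empty]
  | insert e A he ih =>
    rw [Finset.disjoint_insert_left] at h
    rw [Finset.insert_union, liveExpect_insert (by simp [he, h.1]), ih h.2, ih h.2,
      liveExpect_insert he]
    simp only [Finset.insert_union]

theorem liveExpect_mul_of_disjoint (h : Disjoint A B) (f g : Finset (V × V) → ℝ) :
    liveExpect (A ∪ B) q (fun L => f (L ∩ A) * g (L ∩ B)) =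
      liveExpect A q f * liveExpect B q g := by
  have hA : ∀ L₁ ⊆ A, ∀ L₂ ⊆ B, (L₁ ∪ L₂) ∩ A = L₁ := fun L₁ h₁ L₂ h₂ => by
    rw [Finset.union_inter_distrib_right, Finset.inter_eq_left.mpr h₁,
      Finset.disjoint_iff_inter_eq_empty.mp (h.symm.mono_left h₂), Finset.union_empty]
  have hB : ∀ L₁ ⊆ A, ∀ L₂ ⊆ B, (L₁ ∪ L₂) ∩ B = L₂ := fun L₁ h₁ L₂ h₂ => by
    rw [Finset.union_inter_distrib_right, Finset.inter_eq_left.mpr h₂,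
      Finset.disjoint_iff_inter_eq_empty.mp (h.mono_left h₁), Finset.empty_union]
  rw [liveExpect_union h, mul_comm, ← liveExpect_const_mul]
  refine liveExpect_congr fun L₁ h₁ => ?_
  rw [mul_comm, ← liveExpect_const_mul]
  exact liveExpect_congr fun L₂ h₂ => by rw [hA L₁ h₁ L₂ h₂, hB L₁ h₁ L₂ h₂]

theorem liveExpect_inter_of_subset (hA : A ⊆ E) (f : Finset (V × V) → ℝ) :
    liveExpect E q (fun L => f (L ∩ A)) = liveExpect A q f := by
  have h := liveExpect_mul_of_disjoint (q := q) (Finset.disjoint_sdiff (s := A) (t := E)) f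
    (fun _ => 1)
  rw [Finset.union_sdiff_of_subset hA, liveExpect_const, mul_one] at h
  simpa only [mul_one] using h

end Expectation

section Reachability

variable {L L₁ L₂ : Finset (V × V)} {S : Finset V} {u v : V}

theorem reflTransGen_union_pair {x : V} (h₂ : L₂ ⊆ {(u, v), (v, u)})
    (h : Relation.ReflTransGen (fun a b => (a, b) ∈ L₁ ∪ L₂) x u) :
    Relation.ReflTransGen (fun a b => (a, b) ∈ L₁) x u ∨
      ((v, u) ∈ L₂ ∧ Relation.ReflTransGen (fun a b => (a, b) ∈ L₁) x v) := by
  induction h using Relation.ReflTransGen.head_induction_on with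
  | refl => exact Or.inl .refl
  | head step _ ih =>
    rcases Finset.mem_union.mp step with h₁ | h₂'
    · exact ih.imp (·.head h₁) fun ⟨hvu, hr⟩ => ⟨hvu, hr.head h₁⟩
    · rcases Finset.mem_insert.mp (h₂ h₂') with he | he
      · obtain ⟨rfl, -⟩ := Prod.mk.inj he
        exact Or.inl .refl
      · obtain ⟨rfl, rfl⟩ := Prod.mk.inj (Finset.mem_singleton.mp he)
        exact Or.inr ⟨h₂', .refl⟩

theorem reaches_union_pair_iff (h₂ : L₂ ⊆ {(u, v), (v, u)}) :
    Reaches (L₁ ∪ L₂) S u ↔ Reaches L₁ S u ∨ ((v, u) ∈ L₂ ∧ Reaches L₁ S v) := by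
  constructor
  · rintro ⟨s, hs, hr⟩
    exact (reflTransGen_union_pair h₂ hr).imp (fun hr => ⟨s, hs, hr⟩)
      fun ⟨hvu, hr⟩ => ⟨hvu, s, hs, hr⟩
  · rintro (h | ⟨hvu, s, hs, hr⟩)
    · exact Reaches.mono Finset.subset_union_left h
    · exact ⟨s, hs, (Relation.ReflTransGen.mono (fun _ _ hab => Finset.mem_union_left _ hab)
        _ _ hr).tail (Finset.mem_union_right _ hvu)⟩

theorem reaches_iff_reaches_inter {E W : Finset (V × V)} {z : V} (hL : L ⊆ E)
    (hW : ∀ e ∈ E, Relation.ReflTransGen (fun a b => (a, b) ∈ E) e.2 z → e ∈ W) :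
    Reaches L S z ↔ Reaches (L ∩ W) S z := by
  refine ⟨fun ⟨s, hs, hr⟩ => ⟨s, hs, ?_⟩, Reaches.mono Finset.inter_subset_left⟩
  clear hs
  induction hr using Relation.ReflTransGen.head_induction_on with
  | refl => exact .refl
  | head step hr ih =>
    refine ih.head (Finset.mem_inter.mpr ⟨step, hW _ (hL step) ?_⟩)
    exact Relation.ReflTransGen.mono (fun _ _ hab => hL hab) _ _ hr

end Reachability

section Decomposition

variable {E : Finset (V × V)} (q : V × V → ℝ) (S : Finset V) {u v : V}

theorem reachInd_union_pair {L₁ L₂ : Finset (V × V)} (h₂ : L₂ ⊆ {(u, v), (v, u)}) :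
    reachInd (L₁ ∪ L₂) S u = reachInd L₁ S u +
      (1 - reachInd L₁ S u) * reachInd L₁ S v * (if (v, u) ∈ L₂ then 1 else 0) := by
  unfold reachInd
  rw [if_congr (reaches_union_pair_iff h₂) rfl rfl]
  by_cases hu : Reaches L₁ S u <;> by_cases hv : Reaches L₁ S v <;>
    by_cases hvu : (v, u) ∈ L₂ <;> simp [hu, hv, hvu]

theorem ap_eq_add_of_pair_subset [Fintype V] (hP : {(u, v), (v, u)} ⊆ E) :
    ap E q S u = ap (E \ {(u, v), (v, u)}) q S u + q (v, u) *
      liveExpect (E \ {(u, v), (v, u)}) q (fun L => (1 - reachInd L S u) * reachInd L S v) := by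
  rw [ap_eq_liveExpect, ap_eq_liveExpect, ← liveExpect_const_mul, ← liveExpect_add]
  conv_lhs => rw [← Finset.sdiff_union_of_subset hP]
  rw [liveExpect_union Finset.sdiff_disjoint]
  refine liveExpect_congr fun L₁ _ => ?_
  rw [liveExpect_congr fun L₂ h₂ => reachInd_union_pair S h₂, liveExpect_add,
    liveExpect_const, liveExpect_const_mul,
    liveExpect_indicator_mem (Finset.mem_insert_of_mem (Finset.mem_singleton_self _))]
  ring

/-- Independence: reaching `u` depends only on the edges whose head can reach `u`, and
reaching `v` only on the remaining ones. -/
theorem liveExpect_mul_reachInd_of_not_reflTransGen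
    (hE : ∀ a b, (a, b) ∈ E → (b, a) ∈ E)
    (hvu : ¬ Relation.ReflTransGen (fun a b => (a, b) ∈ E) v u) (f g : ℝ → ℝ) :
    liveExpect E q (fun L => f (reachInd L S u) * g (reachInd L S v)) =
      liveExpect E q (fun L => f (reachInd L S u)) *
        liveExpect E q (fun L => g (reachInd L S v)) := by
  set R := fun a b => (a, b) ∈ E
  have : Std.Symm R := ⟨fun a b => hE a b⟩
  set Wu := E.filter fun e => Relation.ReflTransGen R e.2 u
  have hWu : Wu ⊆ E := Finset.filter_subset _ _
  have hu : ∀ L ⊆ E, reachInd L S u = reachInd (L ∩ Wu) S u := fun L hL => by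
    unfold reachInd
    rw [if_congr (reaches_iff_reaches_inter hL fun e he hr => Finset.mem_filter.mpr ⟨he, hr⟩)
      rfl rfl]
  have hv : ∀ L ⊆ E, reachInd L S v = reachInd (L ∩ (E \ Wu)) S v := fun L hL => by
    unfold reachInd
    refine if_congr (reaches_iff_reaches_inter hL fun e he hr => ?_) rfl rfl
    refine Finset.mem_sdiff.mpr ⟨he, fun hWe => hvu ?_⟩
    exact (Std.Symm.symm _ _ hr).trans (Finset.mem_filter.mp hWe).2
  calc liveExpect E q (fun L => f (reachInd L S u) * g (reachInd L S v))
      = liveExpect (Wu ∪ (E \ Wu)) q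
          (fun L => f (reachInd (L ∩ Wu) S u) * g (reachInd (L ∩ (E \ Wu)) S v)) := by
        rw [Finset.union_sdiff_of_subset hWu]
        exact liveExpect_congr fun L hL => by rw [hu L hL, hv L hL]
    _ = liveExpect Wu q (fun L => f (reachInd L S u)) *
          liveExpect (E \ Wu) q (fun L => g (reachInd L S v)) :=
        liveExpect_mul_of_disjoint Finset.disjoint_sdiff (fun M => f (reachInd M S u))
          (fun M => g (reachInd M S v))
    _ = _ := by
        rw [← liveExpect_inter_of_subset hWu, ← liveExpect_inter_of_subset Finset.sdiff_subset]
        congr 1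
        · exact liveExpect_congr fun L hL => by rw [hu L hL]
        · exact liveExpect_congr fun L hL => by rw [hv L hL]

theorem one_sub_ap_eq_mul [Fintype V] (hE : ∀ a b, (a, b) ∈ E → (b, a) ∈ E) (huv : (u, v) ∈ E)
    (hbridge : ¬ Relation.ReflTransGen (fun a b => (a, b) ∈ E \ {(u, v), (v, u)}) v u) :
    1 - ap E q S u = (1 - apSub E q S u v) * (1 - apSub E q S v u * q (v, u)) := by
  have hP : {(u, v), (v, u)} ⊆ E :=
    Finset.insert_subset huv (Finset.singleton_subset_iff.mpr (hE _ _ huv))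
  have hE' : ∀ a b, (a, b) ∈ E \ {(u, v), (v, u)} → (b, a) ∈ E \ {(u, v), (v, u)} :=
    fun a b h => by
      simp only [Finset.mem_sdiff, Finset.mem_insert, Finset.mem_singleton, Prod.mk.injEq] at h ⊢
      exact ⟨hE a b h.1, by tauto⟩
  have hindep := liveExpect_mul_reachInd_of_not_reflTransGen q S hE' hbridge (1 - ·) id
  rw [liveExpect_sub (fun _ => 1) (reachInd · S u), liveExpect_const] at hindep
  simp only [id] at hindep
  rw [apSub, apSub, Finset.pair_comm (v, u), ap_eq_add_of_pair_subset q S hP, hindep,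
    ap_eq_liveExpect, ap_eq_liveExpect]
  ring

end Decomposition

section Bounds

variable {E : Finset (V × V)} {q : V × V → ℝ}

theorem edgeWeight_nonneg (h0 : ∀ e, 0 ≤ q e) (h1 : ∀ e, q e ≤ 1) (L : Finset (V × V)) :
    0 ≤ edgeWeight E q L :=
  mul_nonneg (Finset.prod_nonneg fun e _ => h0 e)
    (Finset.prod_nonneg fun e _ => sub_nonneg.mpr (h1 e))

theorem ap_le_one [Fintype V] (h0 : ∀ e, 0 ≤ q e) (h1 : ∀ e, q e ≤ 1) (S : Finset V) (v : V) :
    ap E q S v ≤ 1 := by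
  refine (Finset.sum_le_sum fun L _ => ?_).trans_eq (liveExpect_const (E := E) (q := q) 1)
  refine mul_le_mul_of_nonneg_left ?_ (edgeWeight_nonneg h0 h1 L)
  split_ifs <;> norm_num

end Bounds

section Tree

variable [Fintype V] {T : SimpleGraph V} [DecidableRel T.Adj] {u v : V}

theorem mem_treeEdges {e : V × V} : e ∈ treeEdges T ↔ T.Adj e.1 e.2 := by
  simp [treeEdges]

theorem swap_mem_treeEdges {a b : V} (h : (a, b) ∈ treeEdges T) : (b, a) ∈ treeEdges T :=
  mem_treeEdges.mpr (mem_treeEdges.mp h).symm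

theorem reachable_deleteEdges_of_reflTransGen {x y : V}
    (h : Relation.ReflTransGen (fun a b => (a, b) ∈ treeEdges T \ {(u, v), (v, u)}) x y) :
    (T.deleteEdges {s(u, v)}).Reachable x y := by
  induction h with
  | refl => rfl
  | @tail a c _ step ih =>
    refine ih.trans (SimpleGraph.Adj.reachable ?_)
    simp only [Finset.mem_sdiff, mem_treeEdges, Finset.mem_insert, Finset.mem_singleton,
      Prod.mk.injEq] at step
    rw [SimpleGraph.deleteEdges_adj, Set.mem_singleton_iff, Sym2.eq_iff]
    exact ⟨step.1, step.2⟩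

theorem not_reflTransGen_of_isAcyclic (hT : T.IsAcyclic) (huv : T.Adj u v) :
    ¬ Relation.ReflTransGen (fun a b => (a, b) ∈ treeEdges T \ {(u, v), (v, u)}) v u :=
  fun h => SimpleGraph.isBridge_iff.mp (SimpleGraph.isAcyclic_iff_forall_adj_isBridge.mp hT huv)
    (reachable_deleteEdges_of_reflTransGen h).symm

end Tree

end LiveEdge

/-- On a bidirected tree where every non-seed node is activated with probability
strictly less than one, for every non-seed node `u` and neighbor `v`:
`1 − ap_B(v\u)·p^B_{vu} > 0` and
`ap_B(u\v) = 1 − (1 − ap_B(u)) / (1 − ap_B(v\u)·p^B_{vu})`. -/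
theorem apSub_eq_div [Fintype V] [DecidableEq V]
    (T : SimpleGraph V) [DecidableRel T.Adj] (hT : T.IsTree)
    (p p' : V × V → ℝ)
    (hp0 : ∀ e, 0 ≤ p e) (hpp' : ∀ e, p e ≤ p' e) (hp'1 : ∀ e, p' e ≤ 1)
    (S B : Finset V)
    (hlt : ∀ w, w ∉ S → ap (treeEdges T) (pB p p' B) S w < 1)
    (u : V) (hu : u ∉ S) (v : V) (hv : T.Adj u v) :
    0 < 1 - apSub (treeEdges T) (pB p p' B) S v u * pB p p' B (v, u) ∧
    apSub (treeEdges T) (pB p p' B) S u v =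
      1 - (1 - ap (treeEdges T) (pB p p' B) S u) /
        (1 - apSub (treeEdges T) (pB p p' B) S v u * pB p p' B (v, u)) := by
  have key := one_sub_ap_eq_mul (pB p p' B) S (fun _ _ => swap_mem_treeEdges)
    (mem_treeEdges.mpr hv) (not_reflTransGen_of_isAcyclic hT.isAcyclic hv)
  have hsub : 0 ≤ 1 - apSub (treeEdges T) (pB p p' B) S u v :=
    sub_nonneg.mpr (ap_le_one (pB_nonneg hp0 hpp') (pB_le_one hpp' hp'1) S u)
  have hpos : 0 < 1 - apSub (treeEdges T) (pB p p' B) S v u * pB p p' B (v, u) :=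
    pos_of_mul_pos_right (key ▸ sub_pos.mpr (hlt u hu)) hsub
  refine ⟨hpos, ?_⟩
  rw [key, mul_div_cancel_right₀ _ hpos.ne']
  ring

end
end
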